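/- Sufficiency of KKT under strictly positive traffic (Proposition: positive input): In the service-chain model, let (φ,t) be feasible for r with a marginal vector λ, and suppose t_i(a,k) > 0 for every i ∈ V and every stage (a,k). If φ satisfies the KKT stationarity condition — for every i, stage (a,k) and admissible j: φ_{ij}(a,k) > 0 implies t_i(a,k)·δ_{ij}(a,k) = min over admissible j′ of t_i(a,k)·δ_{ij′}(a,k) — then (φ,t) is globally optimal: T(φ,t) ≤ T(φ′,t′) for every pair (φ′,t′) feasible for r. -/

import Mathlib

open scoped BigOperators
open Classical

/-- The service-chain network model: a finite directed graph, a finite set of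
applications, each with a chain length, a destination, packet sizes and computation
weights, together with nondecreasing convex continuously differentiable link and
computation cost functions (with their derivatives). -/
structure SCNet (V A : Type) [Fintype V] [DecidableEq V] [Fintype A] where
  /-- the edge relation -/
  E : V → V → Prop
  /-- chain length of each application -/
  K : A → ℕ
  /-- destination of each application -/
  dest : A → V
  /-- packet size of each stage -/
  L : A → ℕ → ℝ
  hL : ∀ a k, k ≤ K a → 0 < L a k
  /-- computation weights -/
  w : V → A → ℕ → ℝ
  hw : ∀ i a k, k ≤ K a → 0 < w i a k
  /-- link cost functions -/
  D : V → V → ℝ → ℝ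
  /-- derivative of the link cost functions -/
  D' : V → V → ℝ → ℝ
  /-- computation cost functions -/
  C : V → ℝ → ℝ
  /-- derivative of the computation cost functions -/
  C' : V → ℝ → ℝ
  hD_mono : ∀ i j, E i j → MonotoneOn (D i j) (Set.Ici 0)
  hD_conv : ∀ i j, E i j → ConvexOn ℝ (Set.Ici 0) (D i j)
  hD_deriv : ∀ i j, E i j → ∀ x ∈ Set.Ici (0 : ℝ),
    HasDerivWithinAt (D i j) (D' i j x) (Set.Ici 0) x
  hD'_cont : ∀ i j, E i j → ContinuousOn (D' i j) (Set.Ici 0)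
  hC_mono : ∀ i, MonotoneOn (C i) (Set.Ici 0)
  hC_conv : ∀ i, ConvexOn ℝ (Set.Ici 0) (C i)
  hC_deriv : ∀ i, ∀ x ∈ Set.Ici (0 : ℝ),
    HasDerivWithinAt (C i) (C' i x) (Set.Ici 0) x
  hC'_cont : ∀ i, ContinuousOn (C' i) (Set.Ici 0)

variable {V A : Type} [Fintype V] [DecidableEq V] [Fintype A]

/-- A forwarding strategy: `φ i (some j) a k` is the fraction of stage-(a,k) traffic
that node `i` forwards to node `j`; `φ i none a k` is the fraction forwarded to `i`'s CPU. -/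
structure IsStrategy (N : SCNet V A) (φ : V → Option V → A → ℕ → ℝ) : Prop where
  nonneg : ∀ i j a k, 0 ≤ φ i j a k
  le_one : ∀ i j a k, φ i j a k ≤ 1
  no_edge : ∀ i j a k, ¬ N.E i j → φ i (some j) a k = 0
  cpu_last : ∀ i a, φ i none a (N.K a) = 0
  sum_one : ∀ i a k, k ≤ N.K a → ¬(i = N.dest a ∧ k = N.K a) →
    φ i none a k + ∑ j, φ i (some j) a k = 1
  sum_dest : ∀ a,
    φ (N.dest a) none a (N.K a) + ∑ j, φ (N.dest a) (some j) a (N.K a) = 0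

/-- A traffic vector for input rates `r` and strategy `φ`. -/
structure IsTraffic (N : SCNet V A) (r : V → A → ℝ) (φ : V → Option V → A → ℕ → ℝ)
    (t : V → A → ℕ → ℝ) : Prop where
  nonneg : ∀ i a k, 0 ≤ t i a k
  base : ∀ i a, t i a 0 = r i a + ∑ j, t j a 0 * φ j (some i) a 0
  step : ∀ i a k, 1 ≤ k → k ≤ N.K a →
    t i a k = (∑ j, t j a k * φ j (some i) a k) + t i a (k - 1) * φ i none a (k - 1)

/-- A pair (strategy, traffic) feasible for the input rates `r`. -/
def Feasible (N : SCNet V A) (r : V → A → ℝ) (φ : V → Option V → A → ℕ → ℝ)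
    (t : V → A → ℕ → ℝ) : Prop :=
  IsStrategy N φ ∧ IsTraffic N r φ t

/-- Total flow (bit/sec) on link `(i,j)`. -/
noncomputable def linkFlow (N : SCNet V A) (φ : V → Option V → A → ℕ → ℝ)
    (t : V → A → ℕ → ℝ) (i j : V) : ℝ :=
  ∑ a, ∑ k ∈ Finset.range (N.K a + 1), N.L a k * (t i a k * φ i (some j) a k)

/-- Total computation workload at node `i`. -/
noncomputable def workload (N : SCNet V A) (φ : V → Option V → A → ℕ → ℝ)
    (t : V → A → ℕ → ℝ) (i : V) : ℝ :=
  ∑ a, ∑ k ∈ Finset.range (N.K a + 1), N.w i a k * (t i a k * φ i none a k)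

/-- The aggregated communication and computation cost `T(φ,t)`. -/
noncomputable def totalCost (N : SCNet V A) (φ : V → Option V → A → ℕ → ℝ)
    (t : V → A → ℕ → ℝ) : ℝ :=
  (∑ i, ∑ j, if N.E i j then N.D i j (linkFlow N φ t i j) else 0)
    + ∑ i, N.C i (workload N φ t i)

/-- A marginal-cost vector `λ` for the pair `(φ,t)`, i.e. a solution of the
recursion defining `∂T/∂t_i(a,k)`. -/
structure IsMarginal (N : SCNet V A) (φ : V → Option V → A → ℕ → ℝ)
    (t : V → A → ℕ → ℝ) (lam : V → A → ℕ → ℝ) : Prop where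
  last : ∀ i a, lam i a (N.K a) =
    ∑ j, φ i (some j) a (N.K a) *
      (N.L a (N.K a) * N.D' i j (linkFlow N φ t i j) + lam j a (N.K a))
  step : ∀ i a k, k < N.K a →
    lam i a k =
      (∑ j, φ i (some j) a k * (N.L a k * N.D' i j (linkFlow N φ t i j) + lam j a k))
        + φ i none a k * (N.w i a k * N.C' i (workload N φ t i) + lam i a (k + 1))

/-- `j` is an admissible forwarding direction at node `i` and stage `(a,k)`:
either a physical out-neighbor, or the CPU provided `k < K a`. -/
def Admissible (N : SCNet V A) (i : V) (a : A) (k : ℕ) : Option V → Prop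
  | some j => N.E i j
  | none => k < N.K a

/-- The modified marginals `δ_{ij}(a,k)`. -/
noncomputable def mdelta (N : SCNet V A) (φ : V → Option V → A → ℕ → ℝ)
    (t : V → A → ℕ → ℝ) (lam : V → A → ℕ → ℝ) (i : V) (a : A) (k : ℕ) :
    Option V → ℝ
  | some j => N.L a k * N.D' i j (linkFlow N φ t i j) + lam j a k
  | none => N.w i a k * N.C' i (workload N φ t i) + lam i a (k + 1)

/-- The sufficient-optimality condition: every direction used at node `i` for stage
`(a,k)` achieves the minimum modified marginal over all admissible directions. -/
def SuffCond (N : SCNet V A) (φ : V → Option V → A → ℕ → ℝ)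
    (t : V → A → ℕ → ℝ) (lam : V → A → ℕ → ℝ) : Prop :=
  ∀ i a k, k ≤ N.K a → ∀ j, Admissible N i a k j → 0 < φ i j a k →
    ∀ j', Admissible N i a k j' →
      mdelta N φ t lam i a k j ≤ mdelta N φ t lam i a k j'

/-!
Convexity of the link and node costs gives `T(ψ,s) - T(φ,t) ≥ Λ(ψ,s) - Λ(φ,t)`, where
`Λ(ψ,s) = Σ D'_{ij}(F_{ij}) F_{ij}(ψ,s) + Σ C'_i(G_i) G_i(ψ,s)` is the cost of `(ψ,s)` linearized
at `(φ,t)`. Splitting each modified marginal `δ_{ij}(a,k)` into a unit cost and the marginal `λ`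
of the next hop, and telescoping along the conservation equations of a feasible `(ψ,s)`, gives
`Λ(ψ,s) = Σ r_i(a) λ_i(a,0) + Σ s_i(a,k) (Σ_j ψ_{ij}(a,k) δ_{ij}(a,k) - λ_i(a,k))`.
The recursion for `λ` makes every bracket vanish for `(ψ,s) = (φ,t)`. Under the KKT condition
(divided by `t_i(a,k) > 0`) `λ_i(a,k)` is a `φ`-average of minimal `δ_{ij}(a,k)`, so every bracket
is nonnegative for any other strategy `ψ`.
-/

theorem ConvexOn.add_mul_sub_le_of_hasDerivWithinAt {S : Set ℝ} {f : ℝ → ℝ} {f' x y : ℝ}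
    (hf : ConvexOn ℝ S f) (hx : x ∈ S) (hy : y ∈ S) (hf' : HasDerivWithinAt f f' S x) :
    f x + f' * (y - x) ≤ f y := by
  rcases lt_trichotomy x y with hxy | rfl | hyx
  · have h := hf.le_slope_of_hasDerivWithinAt hx hy hxy hf'
    rw [slope_def_field, le_div_iff₀ (sub_pos.2 hxy)] at h
    linarith
  · simp
  · have h := hf.slope_le_of_hasDerivWithinAt hy hx hyx hf'
    rw [slope_def_field, div_le_iff₀ (sub_pos.2 hyx)] at h
    linarith

theorem sum_mul_le_sum_mul_of_pos_imp {ι : Type*} [Fintype ι] {p x y : ι → ℝ}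
    (hp : ∀ j, 0 ≤ p j) (hxy : ∀ j, 0 < p j → x j ≤ y j) :
    ∑ j, p j * x j ≤ ∑ j, p j * y j :=
  Finset.sum_le_sum fun j _ => (hp j).eq_or_lt.elim (fun h => by simp [← h])
    fun h => mul_le_mul_of_nonneg_left (hxy j h) h.le

theorem Finset.sum_range_succ_add_eq_sub_add {M : Type*} [AddCommGroup M] {P Q T : ℕ → M}
    {R : M} {n : ℕ} (h0 : P 0 = T 0 - R) (hsucc : ∀ k < n, P (k + 1) = T (k + 1) - Q k) :
    ∑ k ∈ range (n + 1), (P k + Q k) = ∑ k ∈ range (n + 1), T k - R + Q n := by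
  induction n with
  | zero => simp [h0]
  | succ n ih =>
    rw [sum_range_succ, ih fun k hk => hsucc k (by omega), sum_range_succ T (n + 1),
      hsucc n n.lt_succ_self]
    abel

theorem Finset.sum_comm_sum_sum {ι α M : Type*} [AddCommMonoid M] (s : Finset ι) (u : Finset α)
    (v : α → Finset ℕ) (f : ι → α → ℕ → M) :
    ∑ i ∈ s, ∑ a ∈ u, ∑ k ∈ v a, f i a k = ∑ a ∈ u, ∑ k ∈ v a, ∑ i ∈ s, f i a k := by
  rw [Finset.sum_comm]
  exact Finset.sum_congr rfl fun a _ => Finset.sum_comm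

theorem sum_mul_linkFlow (N : SCNet V A) (ψ : V → Option V → A → ℕ → ℝ) (s : V → A → ℕ → ℝ)
    (c : V → V → ℝ) :
    ∑ i, ∑ j, c i j * linkFlow N ψ s i j
      = ∑ a, ∑ k ∈ Finset.range (N.K a + 1), ∑ i,
          s i a k * ∑ j, ψ i (some j) a k * (N.L a k * c i j) := by
  simp only [linkFlow, Finset.mul_sum]
  rw [← Finset.sum_comm_sum_sum]
  refine Finset.sum_congr rfl fun i _ => ?_
  rw [← Finset.sum_comm_sum_sum]
  exact Finset.sum_congr rfl fun j _ => Finset.sum_congr rfl fun a _ =>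
    Finset.sum_congr rfl fun k _ => by ring

theorem sum_mul_workload (N : SCNet V A) (ψ : V → Option V → A → ℕ → ℝ) (s : V → A → ℕ → ℝ)
    (c : V → ℝ) :
    ∑ i, c i * workload N ψ s i
      = ∑ a, ∑ k ∈ Finset.range (N.K a + 1), ∑ i, s i a k * (ψ i none a k * (N.w i a k * c i)) := by
  simp only [workload, Finset.mul_sum]
  rw [← Finset.sum_comm_sum_sum]
  exact Finset.sum_congr rfl fun i _ => Finset.sum_congr rfl fun a _ =>
    Finset.sum_congr rfl fun k _ => by ring

noncomputable def linearizedCost (N : SCNet V A) (φ : V → Option V → A → ℕ → ℝ)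
    (t : V → A → ℕ → ℝ) (ψ : V → Option V → A → ℕ → ℝ) (s : V → A → ℕ → ℝ) : ℝ :=
  (∑ i, ∑ j, N.D' i j (linkFlow N φ t i j) * linkFlow N ψ s i j)
    + ∑ i, N.C' i (workload N φ t i) * workload N ψ s i

section

variable {N : SCNet V A} {r : V → A → ℝ} {φ ψ : V → Option V → A → ℕ → ℝ}
  {t s : V → A → ℕ → ℝ} {lam : V → A → ℕ → ℝ}

namespace IsStrategy

theorem eq_zero_at_dest (hψ : IsStrategy N ψ) (a : A) (j : Option V) :
    ψ (N.dest a) j a (N.K a) = 0 := by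
  have hsum : ∑ j : Option V, ψ (N.dest a) j a (N.K a) = 0 := by
    rw [Fintype.sum_option]
    exact hψ.sum_dest a
  exact (Finset.sum_eq_zero_iff_of_nonneg fun j _ => hψ.nonneg _ j _ _).1 hsum j
    (Finset.mem_univ j)

theorem sum_eq_one (hψ : IsStrategy N ψ) {i : V} {a : A} {k : ℕ} (hk : k ≤ N.K a)
    (hnd : ¬(i = N.dest a ∧ k = N.K a)) : ∑ j : Option V, ψ i j a k = 1 := by
  rw [Fintype.sum_option]
  exact hψ.sum_one i a k hk hnd

theorem admissible_of_pos (hψ : IsStrategy N ψ) {i : V} {a : A} {k : ℕ} (hk : k ≤ N.K a)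
    {j : Option V} (hj : 0 < ψ i j a k) : Admissible N i a k j := by
  cases j with
  | some j => exact by_contra fun hE => hj.ne' (hψ.no_edge i j a k hE)
  | none =>
    rcases hk.lt_or_eq with hlt | rfl
    · exact hlt
    · exact absurd (hψ.cpu_last i a) hj.ne'

theorem linkFlow_nonneg (hψ : IsStrategy N ψ) (hs : ∀ i a k, 0 ≤ s i a k) (i j : V) :
    0 ≤ linkFlow N ψ s i j :=
  Finset.sum_nonneg fun a _ => Finset.sum_nonneg fun k hk =>
    mul_nonneg (N.hL a k (Nat.lt_succ_iff.mp (Finset.mem_range.mp hk))).le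
      (mul_nonneg (hs i a k) (hψ.nonneg _ _ _ _))

theorem workload_nonneg (hψ : IsStrategy N ψ) (hs : ∀ i a k, 0 ≤ s i a k) (i : V) :
    0 ≤ workload N ψ s i :=
  Finset.sum_nonneg fun a _ => Finset.sum_nonneg fun k hk =>
    mul_nonneg (N.hw i a k (Nat.lt_succ_iff.mp (Finset.mem_range.mp hk))).le
      (mul_nonneg (hs i a k) (hψ.nonneg _ _ _ _))

theorem linkFlow_eq_zero (hψ : IsStrategy N ψ) {i j : V} (h : ¬ N.E i j) :
    linkFlow N ψ s i j = 0 :=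
  Finset.sum_eq_zero fun a _ => Finset.sum_eq_zero fun k _ => by
    rw [hψ.no_edge i j a k h, mul_zero, mul_zero]

end IsStrategy

namespace IsMarginal

theorem eq_sum_mul_mdelta (hlam : IsMarginal N φ t lam) (hφ : IsStrategy N φ) {i : V} {a : A}
    {k : ℕ} (hk : k ≤ N.K a) :
    lam i a k = ∑ j : Option V, φ i j a k * mdelta N φ t lam i a k j := by
  rw [Fintype.sum_option]
  rcases hk.lt_or_eq with hlt | rfl
  · rw [hlam.step i a k hlt, add_comm]
    rfl
  · rw [hφ.cpu_last i a, hlam.last i a, zero_mul, zero_add]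
    rfl

theorem eq_zero_at_dest (hlam : IsMarginal N φ t lam) (hφ : IsStrategy N φ) (a : A) :
    lam (N.dest a) a (N.K a) = 0 := by
  simp [hlam.eq_sum_mul_mdelta hφ le_rfl, hφ.eq_zero_at_dest]

theorem le_mdelta (hlam : IsMarginal N φ t lam) (hφ : IsStrategy N φ)
    (hsuff : SuffCond N φ t lam) {i : V} {a : A} {k : ℕ} (hk : k ≤ N.K a)
    (hnd : ¬(i = N.dest a ∧ k = N.K a)) {j' : Option V} (hj' : Admissible N i a k j') :
    lam i a k ≤ mdelta N φ t lam i a k j' :=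
  calc lam i a k = ∑ j, φ i j a k * mdelta N φ t lam i a k j := hlam.eq_sum_mul_mdelta hφ hk
    _ ≤ ∑ j, φ i j a k * mdelta N φ t lam i a k j' :=
      sum_mul_le_sum_mul_of_pos_imp (hφ.nonneg i · a k) fun j hj =>
        hsuff i a k hk j (hφ.admissible_of_pos hk hj) hj j' hj'
    _ = mdelta N φ t lam i a k j' := by rw [← Finset.sum_mul, hφ.sum_eq_one hk hnd, one_mul]

theorem le_sum_mul_mdelta (hlam : IsMarginal N φ t lam) (hφ : IsStrategy N φ)
    (hsuff : SuffCond N φ t lam) (hψ : IsStrategy N ψ) {i : V} {a : A} {k : ℕ}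
    (hk : k ≤ N.K a) : lam i a k ≤ ∑ j : Option V, ψ i j a k * mdelta N φ t lam i a k j := by
  by_cases hnd : i = N.dest a ∧ k = N.K a
  · obtain ⟨rfl, rfl⟩ := hnd
    simp [hlam.eq_zero_at_dest hφ, hψ.eq_zero_at_dest]
  · calc lam i a k = ∑ j, ψ i j a k * lam i a k := by
          rw [← Finset.sum_mul, hψ.sum_eq_one hk hnd, one_mul]
      _ ≤ ∑ j, ψ i j a k * mdelta N φ t lam i a k j :=
        sum_mul_le_sum_mul_of_pos_imp (hψ.nonneg i · a k) fun j hj =>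
          hlam.le_mdelta hφ hsuff hk hnd (hψ.admissible_of_pos hk hj)

end IsMarginal

theorem suffCond_of_pos_traffic (hpos : ∀ i a k, k ≤ N.K a → 0 < t i a k)
    (hkkt : ∀ i a k, k ≤ N.K a → ∀ j, Admissible N i a k j → 0 < φ i j a k →
      ∀ j', Admissible N i a k j' →
        t i a k * mdelta N φ t lam i a k j ≤ t i a k * mdelta N φ t lam i a k j') :
    SuffCond N φ t lam := fun i a k hk j hj hφj j' hj' =>
  le_of_mul_le_mul_left (hkkt i a k hk j hj hφj j' hj') (hpos i a k hk)

namespace IsTraffic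

theorem sum_mul_eq_base (hs : IsTraffic N r ψ s) (i : V) (a : A) :
    ∑ j, s j a 0 * ψ j (some i) a 0 = s i a 0 - r i a := by
  linarith [hs.base i a]

theorem sum_mul_eq_succ (hs : IsTraffic N r ψ s) (i : V) {a : A} {k : ℕ} (hk : k < N.K a) :
    ∑ j, s j a (k + 1) * ψ j (some i) a (k + 1) = s i a (k + 1) - s i a k * ψ i none a k := by
  have h := hs.step i a (k + 1) le_add_self hk
  rw [Nat.add_sub_cancel] at h
  linarith

theorem sum_mul_next_marginal (hs : IsTraffic N r ψ s) (hψ : IsStrategy N ψ)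
    (lam : V → A → ℕ → ℝ) (a : A) :
    ∑ k ∈ Finset.range (N.K a + 1), ∑ i,
        s i a k * (∑ j, ψ i (some j) a k * lam j a k + ψ i none a k * lam i a (k + 1))
      = ∑ k ∈ Finset.range (N.K a + 1), ∑ i, s i a k * lam i a k
        - ∑ i, r i a * lam i a 0 := by
  have hinflow : ∀ k, ∑ i, s i a k * ∑ j, ψ i (some j) a k * lam j a k
      = ∑ j, (∑ i, s i a k * ψ i (some j) a k) * lam j a k := by
    intro k
    simp only [Finset.mul_sum, Finset.sum_mul, mul_assoc]
    exact Finset.sum_comm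
  have h := Finset.sum_range_succ_add_eq_sub_add (n := N.K a)
    (P := fun k => ∑ i, s i a k * ∑ j, ψ i (some j) a k * lam j a k)
    (Q := fun k => ∑ i, s i a k * (ψ i none a k * lam i a (k + 1)))
    (T := fun k => ∑ i, s i a k * lam i a k) (R := ∑ i, r i a * lam i a 0)
    (by
      rw [hinflow, ← Finset.sum_sub_distrib]
      exact Finset.sum_congr rfl fun j _ => by rw [hs.sum_mul_eq_base]; ring)
    (fun k hk => by
      rw [hinflow, ← Finset.sum_sub_distrib]
      exact Finset.sum_congr rfl fun j _ => by rw [hs.sum_mul_eq_succ j hk]; ring)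
  simp only [hψ.cpu_last, zero_mul, mul_zero, Finset.sum_const_zero, add_zero] at h
  simpa only [mul_add, Finset.sum_add_distrib] using h

end IsTraffic

theorem linearizedCost_sub_le_totalCost_sub (hφ : IsStrategy N φ) (ht : ∀ i a k, 0 ≤ t i a k)
    (hψ : IsStrategy N ψ) (hs : ∀ i a k, 0 ≤ s i a k) :
    linearizedCost N φ t ψ s - linearizedCost N φ t φ t ≤ totalCost N ψ s - totalCost N φ t := by
  have hlink : ∀ i j, N.D' i j (linkFlow N φ t i j) * (linkFlow N ψ s i j - linkFlow N φ t i j)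
      ≤ (if N.E i j then N.D i j (linkFlow N ψ s i j) else 0)
        - if N.E i j then N.D i j (linkFlow N φ t i j) else 0 := by
    intro i j
    by_cases hE : N.E i j
    · have h := (N.hD_conv i j hE).add_mul_sub_le_of_hasDerivWithinAt
        (hφ.linkFlow_nonneg ht i j) (hψ.linkFlow_nonneg hs i j)
        (N.hD_deriv i j hE _ (hφ.linkFlow_nonneg ht i j))
      simp only [if_pos hE]
      linarith
    · simp [hE, hφ.linkFlow_eq_zero hE, hψ.linkFlow_eq_zero hE]
  have hnode : ∀ i, N.C' i (workload N φ t i) * (workload N ψ s i - workload N φ t i)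
      ≤ N.C i (workload N ψ s i) - N.C i (workload N φ t i) := by
    intro i
    have h := (N.hC_conv i).add_mul_sub_le_of_hasDerivWithinAt
      (hφ.workload_nonneg ht i) (hψ.workload_nonneg hs i)
      (N.hC_deriv i _ (hφ.workload_nonneg ht i))
    linarith
  calc linearizedCost N φ t ψ s - linearizedCost N φ t φ t
      = (∑ i, ∑ j, N.D' i j (linkFlow N φ t i j) * (linkFlow N ψ s i j - linkFlow N φ t i j))
        + ∑ i, N.C' i (workload N φ t i) * (workload N ψ s i - workload N φ t i) := by
        simp only [linearizedCost, mul_sub, Finset.sum_sub_distrib]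
        ring
    _ ≤ (∑ i, ∑ j, ((if N.E i j then N.D i j (linkFlow N ψ s i j) else 0)
          - if N.E i j then N.D i j (linkFlow N φ t i j) else 0))
        + ∑ i, (N.C i (workload N ψ s i) - N.C i (workload N φ t i)) :=
        add_le_add (Finset.sum_le_sum fun i _ => Finset.sum_le_sum fun j _ => hlink i j)
          (Finset.sum_le_sum fun i _ => hnode i)
    _ = totalCost N ψ s - totalCost N φ t := by
        simp only [totalCost, Finset.sum_sub_distrib]
        ring

theorem linearizedCost_eq (hψ : IsStrategy N ψ) (hs : IsTraffic N r ψ s) (lam : V → A → ℕ → ℝ) :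
    linearizedCost N φ t ψ s
      = ∑ a, ∑ k ∈ Finset.range (N.K a + 1), ∑ i,
          s i a k * (∑ j : Option V, ψ i j a k * mdelta N φ t lam i a k j - lam i a k)
        + ∑ a, ∑ i, r i a * lam i a 0 := by
  rw [linearizedCost, sum_mul_linkFlow, sum_mul_workload, ← Finset.sum_add_distrib,
    ← Finset.sum_add_distrib]
  refine Finset.sum_congr rfl fun a _ => ?_
  have hsplit : ∑ k ∈ Finset.range (N.K a + 1), ∑ i,
        s i a k * (∑ j : Option V, ψ i j a k * mdelta N φ t lam i a k j - lam i a k)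
      = ∑ k ∈ Finset.range (N.K a + 1), ∑ i,
          (s i a k * ∑ j, ψ i (some j) a k * (N.L a k * N.D' i j (linkFlow N φ t i j))
            + s i a k * (ψ i none a k * (N.w i a k * N.C' i (workload N φ t i)))
            + s i a k * (∑ j, ψ i (some j) a k * lam j a k + ψ i none a k * lam i a (k + 1))
            - s i a k * lam i a k) := by
    refine Finset.sum_congr rfl fun k _ => Finset.sum_congr rfl fun i _ => ?_
    simp only [Fintype.sum_option, mdelta, mul_add, Finset.sum_add_distrib]
    ring
  simp only [Finset.sum_add_distrib, Finset.sum_sub_distrib] at hsplit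
  linarith [hs.sum_mul_next_marginal hψ lam a]

end

theorem kkt_sufficient_positive_traffic_general
    (N : SCNet V A) (r : V → A → ℝ)
    (φ : V → Option V → A → ℕ → ℝ) (t : V → A → ℕ → ℝ) (lam : V → A → ℕ → ℝ)
    (hfeas : Feasible N r φ t) (hlam : IsMarginal N φ t lam)
    (hpos : ∀ i a k, k ≤ N.K a → 0 < t i a k)
    (hkkt : ∀ i a k, k ≤ N.K a → ∀ j, Admissible N i a k j → 0 < φ i j a k →
      ∀ j', Admissible N i a k j' →
        t i a k * mdelta N φ t lam i a k j ≤ t i a k * mdelta N φ t lam i a k j') :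
    ∀ (φ' : V → Option V → A → ℕ → ℝ) (t' : V → A → ℕ → ℝ),
      Feasible N r φ' t' → totalCost N φ t ≤ totalCost N φ' t' := by
  rintro φ' t' ⟨hφ', ht'⟩
  obtain ⟨hφ, ht⟩ := hfeas
  have hsuff := suffCond_of_pos_traffic hpos hkkt
  have hfirst := linearizedCost_sub_le_totalCost_sub hφ ht.nonneg hφ' ht'.nonneg
  rw [linearizedCost_eq hφ' ht' lam, linearizedCost_eq hφ ht lam] at hfirst
  have hself : ∑ a, ∑ k ∈ Finset.range (N.K a + 1), ∑ i,
      t i a k * (∑ j : Option V, φ i j a k * mdelta N φ t lam i a k j - lam i a k) = 0 :=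
    Finset.sum_eq_zero fun a _ => Finset.sum_eq_zero fun k hk => Finset.sum_eq_zero fun i _ => by
      rw [← hlam.eq_sum_mul_mdelta hφ (Nat.lt_succ_iff.mp (Finset.mem_range.mp hk)), sub_self,
        mul_zero]
  have hother : 0 ≤ ∑ a, ∑ k ∈ Finset.range (N.K a + 1), ∑ i,
      t' i a k * (∑ j : Option V, φ' i j a k * mdelta N φ t lam i a k j - lam i a k) :=
    Finset.sum_nonneg fun a _ => Finset.sum_nonneg fun k hk => Finset.sum_nonneg fun i _ =>
      mul_nonneg (ht'.nonneg i a k) (sub_nonneg.2 (hlam.le_sum_mul_mdelta hφ hsuff hφ'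
        (Nat.lt_succ_iff.mp (Finset.mem_range.mp hk))))
  linarith

/-- **Sufficiency of the KKT condition under strictly positive traffic.** If `(φ,t)`
is feasible for `r`, all traffics are strictly positive, and `φ` satisfies the KKT
stationarity condition with respect to a marginal vector `λ`, then `(φ,t)` is
globally optimal. -/
theorem kkt_sufficient_positive_traffic
    (N : SCNet V A) (r : V → A → ℝ) (hr : ∀ i a, 0 ≤ r i a)
    (φ : V → Option V → A → ℕ → ℝ) (t : V → A → ℕ → ℝ) (lam : V → A → ℕ → ℝ)
    (hfeas : Feasible N r φ t) (hlam : IsMarginal N φ t lam)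
    (hpos : ∀ i a k, k ≤ N.K a → 0 < t i a k)
    (hkkt : ∀ i a k, k ≤ N.K a → ∀ j, Admissible N i a k j → 0 < φ i j a k →
      ∀ j', Admissible N i a k j' →
        t i a k * mdelta N φ t lam i a k j ≤ t i a k * mdelta N φ t lam i a k j') :
    ∀ (φ' : V → Option V → A → ℕ → ℝ) (t' : V → A → ℕ → ℝ),
      Feasible N r φ' t' → totalCost N φ t ≤ totalCost N φ' t' :=
  kkt_sufficient_positive_traffic_general N r φ t lam hfeas hlam hpos hkkt
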